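/- Let T > 0, K₀ ∈ ℝ, K₁ > 0, B₁ > 0, 0 < α < 1, and let N be an odd natural number. Define the Grünwald–Letnikov coefficients c_k = (−1)^k C(α,k) for k = 0,…,N, the discrete transfer function H(e^{iωT}) = K₀ + (K₁ B₁ T^{−α} ∑_{i=0}^{N} c_i e^{−i·i·ωT}) / (K₁ + B₁ T^{−α} ∑_{i=0}^{N} c_i e^{−i·i·ωT}), and the passivity function f(ω) = [T/(2(1 − cos(ωT)))] · Re[(1 − e^{−iωT}) H(e^{iωT})]. Then the value of f at the Nyquist frequency equals f(π/T) = K₀·T/2 + (K₁·T/2) · B₁·Δ_p / (B₁·Δ_p + K₁·T^α), where Δ_p = ∑_{i=0}^{N} C(α,i). -/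
import Mathlib


open Real Complex

/-- Generalized binomial coefficient `C(α, k) = α(α−1)⋯(α−k+1)/k!` for real `α`. -/
noncomputable def genBinom (α : ℝ) (k : ℕ) : ℝ :=
  (∏ i ∈ Finset.range k, (α - i)) / (Nat.factorial k)

/-- Grünwald–Letnikov coefficient `c_k = (−1)^k C(α,k)`. -/
noncomputable def glCoef (α : ℝ) (k : ℕ) : ℝ := (-1) ^ k * genBinom α k

/-- Short-memory Grünwald–Letnikov sum `S(ω) = ∑_{i=0}^{N} c_i e^{−i·i·ωT}`. -/
noncomputable def glSum (α T : ℝ) (N : ℕ) (ω : ℝ) : ℂ :=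
  ∑ i ∈ Finset.range (N + 1),
    (glCoef α i : ℂ) * Complex.exp (-(i : ℂ) * (ω * T) * Complex.I)

/-- Discrete-time transfer function of the FO-SLS model:
`H(e^{iωT}) = K₀ + (K₁B₁T^{−α} S(ω)) / (K₁ + B₁T^{−α} S(ω))`. -/
noncomputable def foSLS (K₀ K₁ B₁ T α : ℝ) (N : ℕ) (ω : ℝ) : ℂ :=
  (K₀ : ℂ) +
    ((K₁ : ℂ) * (B₁ : ℂ) * ((T ^ α : ℝ) : ℂ)⁻¹ * glSum α T N ω) /
      ((K₁ : ℂ) + (B₁ : ℂ) * ((T ^ α : ℝ) : ℂ)⁻¹ * glSum α T N ω)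

/-- Passivity function `f(ω) = [T/(2(1 − cos(ωT)))] · Re[(1 − e^{−iωT}) H(e^{iωT})]`. -/
noncomputable def passFn (K₀ K₁ B₁ T α : ℝ) (N : ℕ) (ω : ℝ) : ℝ :=
  T / (2 * (1 - Real.cos (ω * T))) *
    ((1 - Complex.exp (-(ω * T : ℝ) * Complex.I)) * foSLS K₀ K₁ B₁ T α N ω).re

lemma genBinom_succ (α : ℝ) (k : ℕ) :
    genBinom α (k+1) = genBinom α k * (α - k) / (k+1) := by
  have hf : (Nat.factorial k : ℝ) ≠ 0 := by positivity
  have hk1 : ((k:ℝ)+1) ≠ 0 := by positivity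
  simp only [genBinom, Finset.prod_range_succ, Nat.factorial_succ]
  push_cast
  field_simp

lemma prod_sign (α : ℝ) (h0 : 0 < α) (h1 : α < 1) (k : ℕ) :
    0 < (-1 : ℝ)^k * ∏ i ∈ Finset.range (k+1), (α - i) := by
  induction k with
  | zero => simpa using h0
  | succ k ih =>
      rw [Finset.prod_range_succ, pow_succ]
      have hk : α - (k+1 : ℕ) < 0 := by
        push_cast; nlinarith [Nat.cast_nonneg (α := ℝ) k]
      nlinarith [ih]

lemma genBinom_pos_odd (α : ℝ) (h0 : 0 < α) (h1 : α < 1) {k : ℕ} (hk : Odd k) :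
    0 < genBinom α k := by
  obtain ⟨m, rfl⟩ := hk
  have := prod_sign α h0 h1 (2*m)
  rw [pow_mul] at this
  simp at this
  have hf : (0:ℝ) < (Nat.factorial (2*m+1) : ℝ) := by positivity
  exact div_pos this hf

lemma pair_pos (α : ℝ) (h0 : 0 < α) (h1 : α < 1) (m : ℕ) :
    0 < genBinom α (2*m+1) + genBinom α (2*m+2) := by
  have hg := genBinom_pos_odd α h0 h1 (k := 2*m+1) ⟨m, by ring⟩
  have h2 := genBinom_succ α (2*m+1)
  have hc : ((2*m+1 : ℕ) : ℝ) = 2*(m:ℝ)+1 := by push_cast; ring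
  rw [hc] at h2
  have key : genBinom α (2*m+1) + genBinom α (2*m+2)
      = genBinom α (2*m+1) * (1+α) / (2*(m:ℝ)+2) := by
    rw [show 2*m+2 = (2*m+1)+1 from rfl, h2]
    have hd : (2*(m:ℝ)+1+1) ≠ 0 := by positivity
    field_simp
    ring
  rw [key]
  positivity

lemma evenSum_ge (α : ℝ) (h0 : 0 < α) (h1 : α < 1) (m : ℕ) :
    1 ≤ ∑ i ∈ Finset.range (2*m+1), genBinom α i := by
  induction m with
  | zero => simp [genBinom]
  | succ m ih =>
      have h : 2*(m+1)+1 = (2*m+1)+1+1 := by ring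
      rw [h, Finset.sum_range_succ, Finset.sum_range_succ]
      have := pair_pos α h0 h1 m
      have h2 : (2*m+1)+1 = 2*m+2 := rfl
      rw [h2]
      linarith

lemma deltaSum_ge (α : ℝ) (h0 : 0 < α) (h1 : α < 1) {N : ℕ} (hN : Odd N) :
    1 ≤ ∑ i ∈ Finset.range (N+1), genBinom α i := by
  obtain ⟨m, rfl⟩ := hN
  rw [show 2*m+1+1 = (2*m+1)+1 from rfl, Finset.sum_range_succ]
  have h1' := evenSum_ge α h0 h1 m
  have h2 := genBinom_pos_odd α h0 h1 (k := 2*m+1) ⟨m, by ring⟩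
  linarith

lemma exp_neg_nat_pi (i : ℕ) : Complex.exp (-(i:ℂ) * (π:ℂ) * Complex.I) = (-1)^i := by
  rw [show -(i:ℂ) * (π:ℂ) * Complex.I = (i:ℕ) * (-((π:ℂ)*Complex.I)) by ring,
    Complex.exp_nat_mul, Complex.exp_neg, Complex.exp_pi_mul_I]
  norm_num

lemma glSum_nyquist (α T : ℝ) (hT : T ≠ 0) (N : ℕ) :
    glSum α T N (π / T) = ((∑ i ∈ Finset.range (N+1), genBinom α i : ℝ) : ℂ) := by
  unfold glSum
  push_cast
  refine Finset.sum_congr rfl fun i _ => ?_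
  have hTc : (T:ℂ) ≠ 0 := by exact_mod_cast hT
  rw [div_mul_cancel₀ _ hTc, exp_neg_nat_pi, glCoef]
  push_cast
  rw [mul_comm ((-1:ℂ)^i * (genBinom α i : ℂ)), ← mul_assoc, ← pow_add,
    Even.neg_one_pow ⟨i, rfl⟩, one_mul]

/-- For `T > 0`, `K₁ > 0`, `B₁ > 0`, `0 < α < 1`, and odd memory length `N`,
the passivity function at the Nyquist frequency equals
`f(π/T) = K₀T/2 + (K₁T/2)·B₁Δ_p/(B₁Δ_p + K₁T^α)`, with `Δ_p = ∑_{i=0}^{N} C(α,i)`. -/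
theorem passFn_at_nyquist
    (T K₀ K₁ B₁ α : ℝ) (hT : 0 < T) (hK₁ : 0 < K₁) (hB₁ : 0 < B₁)
    (h0 : 0 < α) (h1 : α < 1) (N : ℕ) (hN : Odd N) :
    passFn K₀ K₁ B₁ T α N (π / T)
      = K₀ * T / 2 +
        (K₁ * T / 2) *
          (B₁ * (∑ i ∈ Finset.range (N + 1), genBinom α i)) /
            (B₁ * (∑ i ∈ Finset.range (N + 1), genBinom α i) + K₁ * T ^ α) := by
  have hT0 : T ≠ 0 := ne_of_gt hT
  set Δ : ℝ := ∑ i ∈ Finset.range (N + 1), genBinom α i with hΔdef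
  have hΔ : 1 ≤ Δ := deltaSum_ge α h0 h1 hN
  have ht0 : (0:ℝ) < T ^ α := Real.rpow_pos_of_pos hT α
  set t : ℝ := T ^ α with htdef
  have hπT : π / T * T = π := div_mul_cancel₀ _ hT0
  have hexp : Complex.exp (-((π:ℝ) : ℂ) * Complex.I) = -1 := by
    rw [show -((π:ℝ):ℂ) * Complex.I = -((π:ℂ) * Complex.I) by ring,
      Complex.exp_neg, Complex.exp_pi_mul_I]
    norm_num
  have hd0 : (0:ℝ) < K₁ + B₁ * t⁻¹ * Δ := by
    have : 0 < B₁ * t⁻¹ * Δ := by positivity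
    linarith
  set r : ℝ := K₀ + K₁ * B₁ * t⁻¹ * Δ / (K₁ + B₁ * t⁻¹ * Δ) with hrdef
  have hfo : foSLS K₀ K₁ B₁ T α N (π / T) = ((r : ℝ) : ℂ) := by
    unfold foSLS
    rw [glSum_nyquist α T hT0 N, ← hΔdef, ← htdef, hrdef]
    push_cast
    ring
  unfold passFn
  rw [hfo, hπT, hexp, Real.cos_pi]
  have h2 : ((1 - (-1 : ℂ)) * ((r:ℝ):ℂ)).re = 2 * r := by
    rw [show (1 - (-1:ℂ)) * ((r:ℝ):ℂ) = ((2*r : ℝ) : ℂ) by push_cast; ring,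
      Complex.ofReal_re]
  rw [h2, hrdef]
  have hd2 : (0:ℝ) < B₁ * Δ + K₁ * t := by positivity
  have hd0' : K₁ + B₁ * t⁻¹ * Δ ≠ 0 := ne_of_gt hd0
  have hd2' : B₁ * Δ + K₁ * t ≠ 0 := ne_of_gt hd2
  have ht0' : t ≠ 0 := ne_of_gt ht0
  field_simp
  ring
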